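/- Let K, P ∈ M₂(ℂ) and Φ := fromBlocks K P (P‡) (K‡) ∈ M₄(ℂ) with det Φ ≠ 0, and suppose that for every Hermitian v ∈ M₂(ℂ) there exists a Hermitian w with Φ·γ(v) = γ(w)·Φ (i.e. Φ belongs to the Clifford group). Then there exist finitely many Hermitian matrices v₁, …, vₙ ∈ M₂(ℂ), each with det vᵢ ≠ 0 (equivalently, of nonzero Lorentz pseudo-norm), such that Φ = γ(v₁)·γ(v₂)⋯γ(vₙ). That is, the Clifford group is multiplicatively generated by the Clifford images of the non-null Minkowski vectors. -/

import Mathlib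

open Matrix

/-- The space of 2×2 complex matrices. -/
abbrev M2 : Type := Matrix (Fin 2) (Fin 2) ℂ

/-- The space of 4×4 complex matrices, indexed by blocks (endomorphisms of 4-spinor space). -/
abbrev M4 : Type := Matrix (Fin 2 ⊕ Fin 2) (Fin 2 ⊕ Fin 2) ℂ

/-- The Dirac map in two-spinor (Weyl) form: `γ(y) = fromBlocks 0 (√2·y) (√2·adj y) 0`. -/
noncomputable def diracGamma (y : M2) : M4 :=
  fromBlocks 0 ((Real.sqrt 2 : ℂ) • y) ((Real.sqrt 2 : ℂ) • y.adjugate) 0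

/-- The ε-adjoint `X‡ := adj(Xᴴ)`. -/
def ddag (X : M2) : M2 := (Xᴴ).adjugate

/-!
Taking `v = KᴴK` in the Clifford condition shows that `K` is zero or invertible. If it is
invertible, comparing with `v = 1` shows that `B = K⁻¹P` satisfies `B·adj v = v·B` for every
Hermitian `v`; since `adj v = -v` for the Pauli matrices, `B` anticommutes with all three of them,
so `B = 0`. Hence `Φ` is even, `Φ = diag(K, K‡)`, or odd, `Φ = diag(P, P‡)·γ(1/√2)`, and the
equations at `v = 1` force the remaining block to have real determinant. Every invertible 2×2
matrix with real determinant is a product of invertible Hermitian matrices (it suffices to check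
diagonal matrices and transvections), and `diag(h, h‡) = γ(h/2)·γ(1)` for Hermitian `h`.
-/

@[simp] lemma ddag_zero : ddag 0 = 0 := by simp [ddag]

lemma ddag_mul (X Y : M2) : ddag (X * Y) = ddag X * ddag Y := by
  simp [ddag, conjTranspose_mul, adjugate_mul_distrib]

lemma det_ddag (X : M2) : (ddag X).det = star X.det := by
  simp [ddag, det_adjugate, det_conjTranspose]

lemma Matrix.IsHermitian.ddag_eq {h : M2} (hh : h.IsHermitian) : ddag h = h.adjugate := by
  rw [ddag, hh.eq]

lemma isHermitian_fin_two_of (a d : ℝ) (b : ℂ) : !![(a : ℂ), b; star b, d].IsHermitian := by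
  ext i j; fin_cases i <;> fin_cases j <;> simp

def nonnullHermitian : Set M2 := {h | h.IsHermitian ∧ h.det ≠ 0}

abbrev hermitianProducts : Submonoid M2 := Submonoid.closure nonnullHermitian

lemma one_mem_nonnullHermitian : (1 : M2) ∈ nonnullHermitian := ⟨isHermitian_one, by simp⟩

lemma ofReal_smul_mem_nonnullHermitian {c : ℝ} (hc : c ≠ 0) {h : M2}
    (hh : h ∈ nonnullHermitian) : (c : ℂ) • h ∈ nonnullHermitian :=
  ⟨hh.1.smul (by simp [IsSelfAdjoint, Complex.conj_ofReal]), by simp [hc, hh.2]⟩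

lemma hermitian_fin_two_mem_hermitianProducts (a d : ℝ) (b : ℂ) (h : (a * d : ℂ) ≠ b * star b) :
    !![(a : ℂ), b; star b, d] ∈ hermitianProducts :=
  Submonoid.subset_closure
    ⟨isHermitian_fin_two_of a d b, by simpa [det_fin_two_of, sub_eq_zero] using h⟩

lemma upper_unipotent_mem_hermitianProducts (c : ℂ) : !![1, c; 0, 1] ∈ hermitianProducts := by
  rcases eq_or_ne c 0 with rfl | hc
  · simp [← one_fin_two]
  have hfac : !![1, c; 0, 1] = !![((0 : ℝ) : ℂ), c; star c, ((0 : ℝ) : ℂ)] *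
      !![((0 : ℝ) : ℂ), star c⁻¹; star (star c⁻¹), ((1 : ℝ) : ℂ)] := by
    simp [hc]
  rw [hfac]
  exact mul_mem (hermitian_fin_two_mem_hermitianProducts _ _ _ (by simpa using hc))
    (hermitian_fin_two_mem_hermitianProducts _ _ _ (by simpa using hc))

lemma transvection_mem_hermitianProducts {i j : Fin 2} (hij : i ≠ j) (c : ℂ) :
    transvection i j c ∈ hermitianProducts := by
  have hswap : !![((0 : ℝ) : ℂ), 1; star 1, ((0 : ℝ) : ℂ)] ∈ hermitianProducts :=
    hermitian_fin_two_mem_hermitianProducts _ _ _ (by simp)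
  fin_cases i <;> fin_cases j <;> simp only [ne_eq, not_true_eq_false] at hij
  · convert upper_unipotent_mem_hermitianProducts c
    ext a b; fin_cases a <;> fin_cases b <;> simp [transvection, single, one_apply]
  · convert mul_mem (mul_mem hswap (upper_unipotent_mem_hermitianProducts c)) hswap using 1
    ext a b; fin_cases a <;> fin_cases b <;> simp [transvection, single, one_apply]

lemma diagonal_mem_hermitianProducts {D : Fin 2 → ℂ} (hD : D 0 * D 1 ≠ 0)
    (hreal : star (D 0 * D 1) = D 0 * D 1) : diagonal D ∈ hermitianProducts := by
  have h₀ : D 0 ≠ 0 := left_ne_zero_of_mul hD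
  -- `diag(D₀, D₁) = diag(D₀, D̄₀)·diag(1, s)` with `s = D₀D₁/|D₀|²` real,
  -- and `σₓ·diag(D₀, D̄₀)` is Hermitian
  set s : ℝ := (D 0 * D 1).re / Complex.normSq (D 0)
  have hs : starRingEnd ℂ (D 0) * s = D 1 := by
    have hr : ((D 0 * D 1).re : ℂ) = D 0 * D 1 := Complex.conj_eq_iff_re.1 hreal
    have h₀' : starRingEnd ℂ (D 0) ≠ 0 := (map_ne_zero _).2 h₀
    rw [Complex.ofReal_div, hr, ← Complex.mul_conj]
    field_simp
  have hfac : diagonal D = !![((0 : ℝ) : ℂ), 1; star 1, ((0 : ℝ) : ℂ)] *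
      !![((0 : ℝ) : ℂ), star (D 0); star (star (D 0)), ((0 : ℝ) : ℂ)] *
      !![((1 : ℝ) : ℂ), 0; star 0, (s : ℂ)] := by
    ext i j; fin_cases i <;> fin_cases j <;> simp [hs]
  have hs₀ : (s : ℂ) ≠ 0 := fun h => by simp [h, (right_ne_zero_of_mul hD).symm] at hs
  rw [hfac]
  refine mul_mem (mul_mem ?_ ?_) ?_ <;>
    apply hermitian_fin_two_mem_hermitianProducts <;> simp [h₀, hs₀]

lemma mem_hermitianProducts_of_det {X : M2} (hd : X.det ≠ 0) (hreal : star X.det = X.det) :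
    X ∈ hermitianProducts := by
  refine diagonal_transvection_induction (· ∈ hermitianProducts) X (fun D hD => ?_)
    (fun t => transvection_mem_hermitianProducts t.hij t.c) (fun _ _ => mul_mem)
  rw [det_diagonal, Fin.prod_univ_two] at hD
  exact diagonal_mem_hermitianProducts (hD ▸ hd) (hD ▸ hreal)

@[simps]
def blockDiagDdag : M2 →* M4 where
  toFun X := fromBlocks X 0 0 (ddag X)
  map_one' := by simp [ddag, fromBlocks_one]
  map_mul' X Y := by simp [fromBlocks_multiply, ddag_mul]

lemma det_blockDiagDdag (X : M2) : (blockDiagDdag X).det = X.det * star X.det := by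
  rw [blockDiagDdag_apply, det_fromBlocks_zero₂₁, det_ddag]

lemma ofReal_sqrt_two_mul_self : (Real.sqrt 2 : ℂ) * Real.sqrt 2 = 2 := by
  norm_cast; simp

lemma diracGamma_mul_diracGamma (a b : M2) : diracGamma a * diracGamma b =
    fromBlocks ((2 : ℂ) • (a * b.adjugate)) 0 0 ((2 : ℂ) • (a.adjugate * b)) := by
  simp only [diracGamma, fromBlocks_multiply, Matrix.zero_mul, Matrix.mul_zero, add_zero,
    zero_add, smul_mul_smul_comm, ofReal_sqrt_two_mul_self]

lemma Matrix.IsHermitian.blockDiagDdag_eq {h : M2} (hh : h.IsHermitian) :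
    blockDiagDdag h = diracGamma (((2⁻¹ : ℝ) : ℂ) • h) * diracGamma 1 := by
  simp [diracGamma_mul_diracGamma, adjugate_smul, hh.ddag_eq, smul_smul]

lemma exists_list_diracGamma_of_mem_hermitianProducts {X : M2} (hX : X ∈ hermitianProducts) :
    ∃ l : List M2, (∀ v ∈ l, v ∈ nonnullHermitian) ∧
      blockDiagDdag X = (l.map diracGamma).prod := by
  induction hX using Submonoid.closure_induction with
  | mem h hh =>
    refine ⟨[((2⁻¹ : ℝ) : ℂ) • h, 1], ?_, by simp [hh.1.blockDiagDdag_eq]⟩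
    simpa [one_mem_nonnullHermitian] using
      ofReal_smul_mem_nonnullHermitian (c := 2⁻¹) (by norm_num) hh
  | one => exact ⟨[], by simp, by rw [map_one]; rfl⟩
  | mul X Y _ _ hX hY =>
    obtain ⟨l₁, hl₁, h₁⟩ := hX
    obtain ⟨l₂, hl₂, h₂⟩ := hY
    exact ⟨l₁ ++ l₂, List.forall_mem_append.2 ⟨hl₁, hl₂⟩,
      by rw [map_mul, h₁, h₂, List.map_append, List.prod_append]⟩

lemma fromBlocks_zero_ddag (P : M2) : fromBlocks 0 P (ddag P) 0 =
    blockDiagDdag P * diracGamma ((((Real.sqrt 2)⁻¹ : ℝ) : ℂ) • 1) := by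
  simp [diracGamma, fromBlocks_multiply, adjugate_smul, smul_smul]

lemma blocks_eq_of_mul_diracGamma_eq {K P v w : M2}
    (h : fromBlocks K P (ddag P) (ddag K) * diracGamma v
      = diracGamma w * fromBlocks K P (ddag P) (ddag K)) :
    P * v.adjugate = w * ddag P ∧ K * v = w * ddag K ∧
      ddag K * v.adjugate = w.adjugate * K ∧ ddag P * v = w.adjugate * P := by
  simpa [diracGamma, fromBlocks_multiply, fromBlocks_inj, smul_right_inj] using h

open scoped ComplexOrder in
lemma eq_zero_of_det_eq_zero_of_mul_eq_mul_ddag {X w : M2} (hd : X.det = 0)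
    (h : X * (Xᴴ * X) = w * ddag X) : X = 0 := by
  have hsq : (X * Xᴴ) * (X * Xᴴ) = 0 := by
    calc (X * Xᴴ) * (X * Xᴴ) = X * (Xᴴ * X) * Xᴴ := by noncomm_ring
      _ = w * (ddag X * Xᴴ) := by rw [h, Matrix.mul_assoc]
      _ = 0 := by simp [ddag, adjugate_mul, det_conjTranspose, hd]
  rw [← self_mul_conjTranspose_eq_zero, ← conjTranspose_mul_self_eq_zero,
    (isHermitian_mul_conjTranspose_self X).eq, hsq]

lemma eq_zero_of_forall_mul_adjugate_eq {B : M2}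
    (h : ∀ v : M2, v.IsHermitian → B * v.adjugate = v * B) : B = 0 := by
  have hz := h !![1, 0; 0, -1] (by simpa using isHermitian_fin_two_of 1 (-1) 0)
  have hx := h !![0, 1; 1, 0] (by simpa using isHermitian_fin_two_of 0 0 1)
  have hy := h !![0, -Complex.I; Complex.I, 0] (by
    simpa using isHermitian_fin_two_of 0 0 (-Complex.I))
  rw [eta_fin_two B] at hz hx hy
  simp only [adjugate_fin_two_of, mul_fin_two, EmbeddingLike.apply_eq_iff_eq, vecCons_inj,
    and_true] at hz hx hy
  have h00 : B 0 0 = 0 := by linear_combination -hz.1.1 / 2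
  have h11 : B 1 1 = 0 := by linear_combination hz.2.2 / 2
  have h01 : B 0 1 = 0 := by
    linear_combination (Complex.I * hy.1.1 + (B 0 1 - B 1 0) * Complex.I_sq - hx.1.1) / 2
  have h10 : B 1 0 = 0 := by linear_combination -hx.1.1 - h01
  rw [eta_fin_two B, h00, h01, h10, h11]
  exact (eta_fin_two 0).symm

lemma eq_zero_of_forall_exists_intertwining {K P : M2} (hK : IsUnit K.det)
    (h : ∀ v : M2, v.IsHermitian → ∃ M : M2, K * v = M * K ∧ P * v.adjugate = M * P) :
    P = 0 := by
  suffices K⁻¹ * P = 0 by rw [← mul_nonsing_inv_cancel_left K P hK, this, Matrix.mul_zero]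
  refine eq_zero_of_forall_mul_adjugate_eq fun v hv => ?_
  obtain ⟨M, hKv, hPv⟩ := h v hv
  calc K⁻¹ * P * v.adjugate = K⁻¹ * (M * K) * (K⁻¹ * P) := by
        rw [Matrix.mul_assoc, hPv, Matrix.mul_assoc, Matrix.mul_assoc,
          mul_nonsing_inv_cancel_left K P hK]
    _ = v * (K⁻¹ * P) := by rw [← hKv, nonsing_inv_mul_cancel_left K v hK]

lemma eq_zero_or_eq_zero_of_forall_exists {K P : M2}
    (hcl : ∀ v : M2, v.IsHermitian → ∃ w : M2, fromBlocks K P (ddag P) (ddag K) * diracGamma v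
      = diracGamma w * fromBlocks K P (ddag P) (ddag K)) :
    K = 0 ∨ P = 0 := by
  refine or_iff_not_imp_left.2 fun hK => ?_
  have hKd : IsUnit K.det := by
    obtain ⟨w, hw⟩ := hcl _ (isHermitian_conjTranspose_mul_self K)
    exact isUnit_iff_ne_zero.2 fun hd =>
      hK (eq_zero_of_det_eq_zero_of_mul_eq_mul_ddag hd (blocks_eq_of_mul_diracGamma_eq hw).2.1)
  obtain ⟨w₀, h₀⟩ := hcl 1 isHermitian_one
  obtain ⟨-, -, hK₀, hP₀⟩ := blocks_eq_of_mul_diracGamma_eq h₀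
  rw [adjugate_one, Matrix.mul_one] at hK₀
  rw [Matrix.mul_one] at hP₀
  refine eq_zero_of_forall_exists_intertwining hKd fun v hv => ?_
  obtain ⟨w, hw⟩ := hcl v hv
  obtain ⟨hP, hK, -, -⟩ := blocks_eq_of_mul_diracGamma_eq hw
  exact ⟨w * w₀.adjugate, by rw [hK, hK₀, Matrix.mul_assoc], by rw [hP, hP₀, Matrix.mul_assoc]⟩

lemma star_det_eq_of_eq_mul_ddag {X w : M2} (hX : X ≠ 0) (h₁ : X = w * ddag X)
    (h₂ : ddag X = w.adjugate * X) : star X.det = X.det := by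
  have hw : w.det = 1 := by
    have : (w.det - 1) • X = 0 := by
      rw [sub_smul, one_smul, sub_eq_zero]
      conv_rhs => rw [h₁, h₂, ← Matrix.mul_assoc, mul_adjugate, smul_mul, Matrix.one_mul]
    simpa [sub_eq_zero, hX] using this
  conv_rhs => rw [h₁]
  rw [det_mul, hw, one_mul, det_ddag]

lemma exists_list_diracGamma_eq_blockDiagDdag {X w : M2} (hd : (blockDiagDdag X).det ≠ 0)
    (h₁ : X = w * ddag X) (h₂ : ddag X = w.adjugate * X) :
    ∃ l : List M2, (∀ v ∈ l, v ∈ nonnullHermitian) ∧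
      blockDiagDdag X = (l.map diracGamma).prod := by
  have hX : X.det ≠ 0 := left_ne_zero_of_mul (det_blockDiagDdag X ▸ hd)
  exact exists_list_diracGamma_of_mem_hermitianProducts <| mem_hermitianProducts_of_det hX <|
    star_det_eq_of_eq_mul_ddag (fun h => by simp [h] at hX) h₁ h₂

/-- The Clifford group is multiplicatively generated by the Clifford images of non-null
Minkowski vectors: every invertible `Φ = fromBlocks K P (P‡) (K‡)` whose adjoint action
stabilizes `γ(H)` is a finite product `γ(v₁)·γ(v₂)⋯γ(vₙ)` of images of Hermitian
matrices `vᵢ` with `det vᵢ ≠ 0` (nonzero Lorentz pseudo-norm). -/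
theorem clifford_group_generated_by_nonnull_vectors (K P : M2)
    (hdet : (fromBlocks K P (ddag P) (ddag K)).det ≠ 0)
    (hcl : ∀ v : M2, v.IsHermitian → ∃ w : M2, w.IsHermitian ∧
      fromBlocks K P (ddag P) (ddag K) * diracGamma v
        = diracGamma w * fromBlocks K P (ddag P) (ddag K)) :
    ∃ l : List M2, (∀ v ∈ l, v.IsHermitian ∧ v.det ≠ 0) ∧
      fromBlocks K P (ddag P) (ddag K) = (l.map diracGamma).prod := by
  obtain ⟨w₀, -, h₀⟩ := hcl 1 isHermitian_one
  obtain ⟨hP₁, hK₁, hK₂, hP₂⟩ := blocks_eq_of_mul_diracGamma_eq h₀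
  simp only [adjugate_one, Matrix.mul_one] at hP₁ hK₁ hK₂ hP₂
  rcases eq_zero_or_eq_zero_of_forall_exists fun v hv => (hcl v hv).imp fun _ => And.right
    with rfl | rfl
  · rw [ddag_zero, fromBlocks_zero_ddag] at hdet ⊢
    rw [det_mul] at hdet
    obtain ⟨l, hl, hPl⟩ :=
      exists_list_diracGamma_eq_blockDiagDdag (left_ne_zero_of_mul hdet) hP₁ hP₂
    refine ⟨l ++ [(((Real.sqrt 2)⁻¹ : ℝ) : ℂ) • 1], List.forall_mem_append.2 ⟨hl, ?_⟩,
      by simp [hPl]⟩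
    exact List.forall_mem_singleton.2
      (ofReal_smul_mem_nonnullHermitian (by simp) one_mem_nonnullHermitian)
  · rw [ddag_zero] at hdet ⊢
    exact exists_list_diracGamma_eq_blockDiagDdag hdet hK₁ hK₂
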